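/- arXiv:1711.03953 — 6 statements merged into one kernel-verified Lean document; each statement's English description precedes it below -/
import Mathlib

section
/- (Proposition 1, matrix form, necessity direction.) Let P be an N×M real matrix with all entries strictly positive and each row summing to 1, and let A be the N×M matrix with entries A_{ij} = log P_{ij}. If there exist an N×d real matrix H and an M×d real matrix W such that the row-wise softmax of H Wᵀ equals P, then d ≥ min_{A' ∈ F(A)} rank(A'), where the minimum is the infimum of the set of ranks of matrices in F(A). -/
open Matrix

/-- Row-wise softmax of an N×M real matrix. -/
noncomputable def rowSoftmax {N M : ℕ} (B : Matrix (Fin N) (Fin M) ℝ) :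
    Matrix (Fin N) (Fin M) ℝ :=
  fun i j => Real.exp (B i j) / ∑ k, Real.exp (B i k)

/-- Proposition 1, necessity: if some `H Wᵀ` softmaxes to `P`, then
`d ≥ min_{A' ∈ F(A)} rank A'` where `A = log P`. -/
theorem dim_ge_min_rank_of_softmax_eq {N M d : ℕ}
    (P : Matrix (Fin N) (Fin M) ℝ)
    (hpos : ∀ i j, 0 < P i j) (hsum : ∀ i, ∑ j, P i j = 1)
    (A : Matrix (Fin N) (Fin M) ℝ) (hA : ∀ i j, A i j = Real.log (P i j))
    (H : Matrix (Fin N) (Fin d) ℝ) (W : Matrix (Fin M) (Fin d) ℝ)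
    (h : rowSoftmax (H * Wᵀ) = P) :
    sInf {r : ℕ | ∃ c : Fin N → ℝ,
      (Matrix.of fun i j => A i j + c i : Matrix (Fin N) (Fin M) ℝ).rank = r} ≤ d := by
  set B := H * Wᵀ with hB
  set c : Fin N → ℝ := fun i => Real.log (∑ k, Real.exp (B i k)) with hc
  have hSpos : ∀ i, 0 < ∑ k, Real.exp (B i k) := by
    intro i
    have hM : 0 < M := by
      rcases Nat.eq_zero_or_pos M with hM | hM
      · subst hM; have := hsum i; simp at this
      · exact hM
    exact Finset.sum_pos (fun k _ => Real.exp_pos _) ⟨⟨0, hM⟩, Finset.mem_univ _⟩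
  have key : (Matrix.of fun i j => A i j + c i : Matrix (Fin N) (Fin M) ℝ) = B := by
    ext i j
    have hP : P i j = Real.exp (B i j) / ∑ k, Real.exp (B i k) := by
      rw [← h]; rfl
    simp only [Matrix.of_apply, hA, hP, hc]
    rw [Real.log_div (Real.exp_ne_zero _) (ne_of_gt (hSpos i)), Real.log_exp]
    ring
  have hmem : B.rank ∈ {r : ℕ | ∃ c : Fin N → ℝ,
      (Matrix.of fun i j => A i j + c i : Matrix (Fin N) (Fin M) ℝ).rank = r} :=
    ⟨c, by rw [key]⟩
  exact le_trans (Nat.sInf_le hmem)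
    (le_trans (Matrix.rank_mul_le_right H Wᵀ) (le_of_eq_of_le (Matrix.rank_transpose W) (le_trans (Matrix.rank_le_width W) (le_refl d))))
end

section
/- (Proposition 1, matrix form, sufficiency direction.) Let P be an N×M real matrix with all entries strictly positive and each row summing to 1, and let A be the N×M matrix with entries A_{ij} = log P_{ij}. If d ≥ min_{A' ∈ F(A)} rank(A'), then there exist an N×d real matrix H and an M×d real matrix W such that the row-wise softmax of H Wᵀ equals P. -/
open Matrix

/-- Factor a matrix of rank ≤ d through Fin d. -/
lemma exists_factor_of_rank_le {N M d : ℕ} (B : Matrix (Fin N) (Fin M) ℝ)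
    (h : B.rank ≤ d) :
    ∃ (H : Matrix (Fin N) (Fin d) ℝ) (W : Matrix (Fin M) (Fin d) ℝ), H * Wᵀ = B := by
  classical
  set L := B.mulVecLin with hL
  set V := LinearMap.range L with hV
  have hr : Module.finrank ℝ V ≤ d := h
  set r := Module.finrank ℝ V with hrr
  let e : V ≃ₗ[ℝ] (Fin r → ℝ) := (Module.finBasis ℝ V).equivFun
  let ext : (Fin r → ℝ) →ₗ[ℝ] (Fin d → ℝ) :=
    { toFun := fun x j => if hj : (j : ℕ) < r then x ⟨j, hj⟩ else 0
      map_add' := by intro x y; funext j; by_cases hj : (j : ℕ) < r <;> simp [hj]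
      map_smul' := by intro s x; funext j; by_cases hj : (j : ℕ) < r <;> simp [hj] }
  let proj : (Fin d → ℝ) →ₗ[ℝ] (Fin r → ℝ) := LinearMap.funLeft ℝ ℝ (Fin.castLE hr)
  let f : (Fin M → ℝ) →ₗ[ℝ] (Fin d → ℝ) := ext ∘ₗ e.toLinearMap ∘ₗ L.rangeRestrict
  let g : (Fin d → ℝ) →ₗ[ℝ] (Fin N → ℝ) := V.subtype ∘ₗ e.symm.toLinearMap ∘ₗ proj
  have hgf : g ∘ₗ f = L := by
    apply LinearMap.ext; intro x
    have hpe : proj (ext (e (L.rangeRestrict x))) = e (L.rangeRestrict x) := by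
      funext j
      simp [proj, ext, LinearMap.funLeft, Fin.castLE]
    simp only [LinearMap.comp_apply, f, g, LinearEquiv.coe_coe]
    rw [hpe]
    simp
  refine ⟨LinearMap.toMatrix' g, (LinearMap.toMatrix' f)ᵀ, ?_⟩
  rw [transpose_transpose, ← LinearMap.toMatrix'_comp, hgf]
  rw [show L = Matrix.toLin' B from rfl, LinearMap.toMatrix'_toLin']

/-- Proposition 1, sufficiency: if `d ≥ min_{A' ∈ F(A)} rank A'` where `A = log P`,
then some `H Wᵀ` softmaxes to `P`. -/
theorem exists_factorization_of_dim_ge_min_rank {N M d : ℕ}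
    (P : Matrix (Fin N) (Fin M) ℝ)
    (hpos : ∀ i j, 0 < P i j) (hsum : ∀ i, ∑ j, P i j = 1)
    (A : Matrix (Fin N) (Fin M) ℝ) (hA : ∀ i j, A i j = Real.log (P i j))
    (hd : sInf {r : ℕ | ∃ c : Fin N → ℝ,
      (Matrix.of fun i j => A i j + c i : Matrix (Fin N) (Fin M) ℝ).rank = r} ≤ d) :
    ∃ (H : Matrix (Fin N) (Fin d) ℝ) (W : Matrix (Fin M) (Fin d) ℝ),
      rowSoftmax (H * Wᵀ) = P := by
  classical
  set S : Set ℕ := {r : ℕ | ∃ c : Fin N → ℝ,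
      (Matrix.of fun i j => A i j + c i : Matrix (Fin N) (Fin M) ℝ).rank = r} with hS
  have hne : S.Nonempty := ⟨_, fun _ => 0, rfl⟩
  obtain ⟨c, hc⟩ : sInf S ∈ S := Nat.sInf_mem hne
  set B : Matrix (Fin N) (Fin M) ℝ := Matrix.of fun i j => A i j + c i with hB
  have hrank : B.rank ≤ d := by rw [hc]; exact hd
  obtain ⟨H, W, hHW⟩ := exists_factor_of_rank_le B hrank
  refine ⟨H, W, ?_⟩
  rw [hHW]
  funext i j
  have hexp : ∀ k, Real.exp (B i k) = Real.exp (c i) * P i k := by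
    intro k
    rw [hB]
    simp only [Matrix.of_apply, hA, Real.exp_add, Real.exp_log (hpos i k)]
    ring
  simp only [rowSoftmax, hexp, ← Finset.mul_sum, hsum i, mul_one]
  rw [mul_comm, mul_div_assoc, div_self (Real.exp_ne_zero _), mul_one]
end

section
/- (Proposition 1, matrix form.) Let P be an N×M real matrix with all entries strictly positive and each row summing to 1, and let A be the N×M matrix with entries A_{ij} = log P_{ij}. Then there exist an N×d real matrix H and an M×d real matrix W such that the row-wise softmax of H Wᵀ equals P if and only if d ≥ min_{A' ∈ F(A)} rank(A'). -/
open Matrix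

lemma sum_dite_lt {r d : ℕ} (hr : r ≤ d) (g : Fin r → ℝ) :
    ∑ k : Fin d, (if h : (k : ℕ) < r then g ⟨k, h⟩ else 0) = ∑ k : Fin r, g k := by
  rw [Fin.sum_univ_eq_sum_range (fun k => if h : k < r then g ⟨k, h⟩ else 0)]
  have h1 : ∑ k ∈ Finset.range r, (if h : k < r then g ⟨k, h⟩ else 0) = ∑ k : Fin r, g k := by
    rw [← Fin.sum_univ_eq_sum_range (fun k => if h : k < r then g ⟨k, h⟩ else 0)]
    exact Finset.sum_congr rfl fun k _ => dif_pos k.isLt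
  rw [← h1]
  symm
  apply Finset.sum_subset (Finset.range_subset_range.mpr hr)
  intro k _ hk
  simp only [Finset.mem_range, not_lt] at hk
  rw [dif_neg (by omega)]

lemma rank_le_iff_factor {N M d : ℕ} (B : Matrix (Fin N) (Fin M) ℝ) :
    B.rank ≤ d ↔ ∃ (H : Matrix (Fin N) (Fin d) ℝ) (W : Matrix (Fin M) (Fin d) ℝ),
      H * Wᵀ = B := by
  constructor
  · intro hle
    set V := LinearMap.range B.mulVecLin with hV
    have hfin : Module.finrank ℝ V = B.rank := rfl
    set r := B.rank with hrk
    have hr : r ≤ d := hle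
    let bV : Module.Basis (Fin r) ℝ V := Module.finBasisOfFinrankEq ℝ V hfin
    have hcol : ∀ j, (fun i => B i j) ∈ V := by
      intro j
      refine ⟨Pi.single j 1, ?_⟩
      ext i
      simp [Matrix.mulVecLin, Matrix.mulVec, dotProduct, Pi.single_apply]
    refine ⟨fun i k => if h : (k : ℕ) < r then ((bV ⟨k, h⟩ : Fin N → ℝ) i) else 0,
      fun j k => if h : (k : ℕ) < r then bV.repr ⟨_, hcol j⟩ ⟨k, h⟩ else 0, ?_⟩
    ext i j
    have := bV.sum_repr ⟨_, hcol j⟩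
    have h2 : ∑ k : Fin r, bV.repr ⟨_, hcol j⟩ k • ((bV k : Fin N → ℝ)) = fun i => B i j := by
      have := congrArg Subtype.val this
      simpa only [Submodule.coe_sum, Submodule.coe_smul] using this
    have h3 := congrFun h2 i
    change ∑ k : Fin d, (if h : (k:ℕ) < r then ((bV ⟨k,h⟩ : Fin N → ℝ) i) else 0) *
        (if h : (k:ℕ) < r then bV.repr ⟨_, hcol j⟩ ⟨k, h⟩ else 0) = B i j
    rw [show (∑ k : Fin d, (if h : (k:ℕ) < r then ((bV ⟨k,h⟩ : Fin N → ℝ) i) else 0) *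
        (if h : (k:ℕ) < r then bV.repr ⟨_, hcol j⟩ ⟨k, h⟩ else 0))
      = ∑ k : Fin d, (if h : (k:ℕ) < r then
          ((bV ⟨k,h⟩ : Fin N → ℝ) i) * bV.repr ⟨_, hcol j⟩ ⟨k, h⟩ else 0) from by
        apply Finset.sum_congr rfl; intro k _; split <;> simp]
    rw [sum_dite_lt hr (fun k => ((bV k : Fin N → ℝ) i) * bV.repr ⟨_, hcol j⟩ k)]
    rw [← h3]
    simp [mul_comm]
  · rintro ⟨H, W, rfl⟩
    calc (H * Wᵀ).rank ≤ H.rank := Matrix.rank_mul_le_left H Wᵀ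
      _ ≤ d := by simpa using Matrix.rank_le_card_width H

/-- Proposition 1 (matrix form): `P` is realizable by a rank-`d` softmax factorization
iff `d ≥ min_{A' ∈ F(A)} rank A'` where `A = log P`. -/
theorem softmax_factorization_iff_dim_ge_min_rank {N M d : ℕ}
    (P : Matrix (Fin N) (Fin M) ℝ)
    (hpos : ∀ i j, 0 < P i j) (hsum : ∀ i, ∑ j, P i j = 1)
    (A : Matrix (Fin N) (Fin M) ℝ) (hA : ∀ i j, A i j = Real.log (P i j)) :
    (∃ (H : Matrix (Fin N) (Fin d) ℝ) (W : Matrix (Fin M) (Fin d) ℝ),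
        rowSoftmax (H * Wᵀ) = P) ↔
      sInf {r : ℕ | ∃ c : Fin N → ℝ,
        (Matrix.of fun i j => A i j + c i : Matrix (Fin N) (Fin M) ℝ).rank = r} ≤ d := by
  constructor
  · rintro ⟨H, W, hHW⟩
    set B := H * Wᵀ with hB
    set c : Fin N → ℝ := fun i => Real.log (∑ k, Real.exp (B i k)) with hc
    have hSpos : ∀ i, 0 < ∑ k, Real.exp (B i k) := by
      intro i
      have hM : 0 < M := by
        by_contra h
        have h0 : M = 0 := by omega
        subst h0
        simpa using hsum i
      have : Nonempty (Fin M) := Fin.pos_iff_nonempty.mp hM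
      exact Finset.sum_pos (fun k _ => Real.exp_pos _) Finset.univ_nonempty
    have hkey : (Matrix.of fun i j => A i j + c i : Matrix (Fin N) (Fin M) ℝ) = B := by
      ext i j
      have hP : P i j = Real.exp (B i j) / ∑ k, Real.exp (B i k) := by
        rw [← hHW]; rfl
      simp only [Matrix.of_apply, hA, hP, hc]
      rw [Real.log_div (Real.exp_ne_zero _) (ne_of_gt (hSpos i)), Real.log_exp]
      ring
    have hmem : B.rank ∈ {r : ℕ | ∃ c : Fin N → ℝ,
        (Matrix.of fun i j => A i j + c i : Matrix (Fin N) (Fin M) ℝ).rank = r} :=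
      ⟨c, by rw [hkey]⟩
    exact le_trans (Nat.sInf_le hmem) ((rank_le_iff_factor B).mpr ⟨H, W, rfl⟩)
  · intro hd
    have hne : {r : ℕ | ∃ c : Fin N → ℝ,
        (Matrix.of fun i j => A i j + c i : Matrix (Fin N) (Fin M) ℝ).rank = r}.Nonempty :=
      ⟨_, fun _ => 0, rfl⟩
    obtain ⟨c, hc⟩ := Nat.sInf_mem hne
    obtain ⟨H, W, hHW⟩ := (rank_le_iff_factor _).mp (hc.trans_le hd)
    refine ⟨H, W, ?_⟩
    rw [hHW]
    ext i j
    have hS : ∑ k, Real.exp (A i k + c i) = Real.exp (c i) := by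
      have : ∀ k, Real.exp (A i k + c i) = P i k * Real.exp (c i) := by
        intro k
        rw [Real.exp_add, hA, Real.exp_log (hpos i k)]
      simp only [this, ← Finset.sum_mul, hsum i, one_mul]
    simp only [rowSoftmax, Matrix.of_apply, hS]
    rw [Real.exp_add, hA, Real.exp_log (hpos i j), mul_div_assoc,
      div_self (Real.exp_ne_zero _), mul_one]
end

section
/- (Softmax Bottleneck, Corollary 1, matrix form.) Let P be an N×M real matrix with all entries strictly positive and each row summing to 1, and let A be the N×M matrix with entries A_{ij} = log P_{ij}. If d + 1 < rank(A), then for every N×d real matrix H and every M×d real matrix W, the row-wise softmax of H Wᵀ is not equal to P; i.e., there exists a row index i such that the i-th row of Softmax(H Wᵀ) differs from the i-th row of P. -/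
open Matrix

/-- Softmax Bottleneck (Corollary 1, matrix form): if `d + 1 < rank (log P)`, then
no `H Wᵀ` can softmax to `P`; some row of the softmax differs from that of `P`. -/
theorem softmax_bottleneck {N M d : ℕ}
    (P : Matrix (Fin N) (Fin M) ℝ)
    (hpos : ∀ i j, 0 < P i j) (hsum : ∀ i, ∑ j, P i j = 1)
    (A : Matrix (Fin N) (Fin M) ℝ) (hA : ∀ i j, A i j = Real.log (P i j))
    (hd : d + 1 < A.rank) :
    ∀ (H : Matrix (Fin N) (Fin d) ℝ) (W : Matrix (Fin M) (Fin d) ℝ),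
      ∃ i : Fin N, rowSoftmax (H * Wᵀ) i ≠ P i := by
  intro H W
  by_contra hcon
  push_neg at hcon
  set B : Matrix (Fin N) (Fin M) ℝ := H * Wᵀ with hB
  set S : Fin N → ℝ := fun i => ∑ k, Real.exp (B i k) with hS
  have hM : 0 < M := by
    by_contra hM
    have : A.rank ≤ M := le_trans (Matrix.rank_le_card_width A) (by simp)
    omega
  have : Nonempty (Fin M) := ⟨⟨0, hM⟩⟩
  have hSpos : ∀ i, 0 < S i := fun i =>
    Finset.sum_pos (fun k _ => Real.exp_pos _) Finset.univ_nonempty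
  -- Each entry of A equals B i j - log (S i)
  have key : ∀ i j, A i j = B i j - Real.log (S i) := by
    intro i j
    have h1 : P i j = Real.exp (B i j) / S i := by
      rw [← hcon i]; rfl
    rw [hA, h1, Real.log_div (Real.exp_ne_zero _) (ne_of_gt (hSpos i)), Real.log_exp]
  -- Augmented factorization
  let H₂ : Matrix (Fin N) (Fin (d + 1)) ℝ :=
    fun i => Fin.snoc (fun k => H i k) (Real.log (S i))
  let W₂ : Matrix (Fin M) (Fin (d + 1)) ℝ :=
    fun j => Fin.snoc (fun k => W j k) (-1)
  have hfac : A = H₂ * W₂ᵀ := by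
    ext i j
    rw [key i j, Matrix.mul_apply]
    simp only [Matrix.transpose_apply]
    have hBij : B i j = ∑ k, H i k * W j k := by
      simp [hB, Matrix.mul_apply, Matrix.transpose_apply]
    simp [Matrix.mul_apply, Matrix.transpose_apply, Fin.sum_univ_castSucc, H₂, W₂,
      Fin.snoc_castSucc, Fin.snoc_last, hBij]
    ring
  have hrank : A.rank ≤ d + 1 := by
    rw [hfac]
    calc (H₂ * W₂ᵀ).rank ≤ H₂.rank := Matrix.rank_mul_le_left H₂ W₂ᵀ
      _ ≤ Fintype.card (Fin (d + 1)) := Matrix.rank_le_card_width H₂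
      _ = d + 1 := by simp
  omega
end

section
/- If an N×M real matrix A' factorizes as A' = H Wᵀ for an N×d real matrix H and an M×d real matrix W, then rank(A') ≤ d; consequently, if the row-wise softmax of H Wᵀ equals the row-wise softmax of a matrix A, then some matrix in F(A) has rank at most d, and hence rank(A) ≤ d + 1. -/
open Matrix

lemma matrix_rank_add_le {N M : ℕ} (X Y : Matrix (Fin N) (Fin M) ℝ) :
    (X + Y).rank ≤ X.rank + Y.rank := by
  have hle : LinearMap.range (X + Y).mulVecLin ≤
      LinearMap.range X.mulVecLin ⊔ LinearMap.range Y.mulVecLin := by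
    rintro v ⟨u, rfl⟩
    rw [mulVecLin_add]
    exact Submodule.add_mem_sup ⟨u, rfl⟩ ⟨u, rfl⟩
  calc (X + Y).rank ≤ Module.finrank ℝ
        (LinearMap.range X.mulVecLin ⊔ LinearMap.range Y.mulVecLin : Submodule ℝ (Fin N → ℝ)) :=
        Submodule.finrank_mono hle
    _ ≤ X.rank + Y.rank := Submodule.finrank_add_le_finrank_add_finrank _ _

lemma matrix_rank_const_col_le_one {N M : ℕ} (v : Fin N → ℝ) :
    (Matrix.of fun i (_ : Fin M) => v i : Matrix (Fin N) (Fin M) ℝ).rank ≤ 1 := by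
  have h : (Matrix.of fun i (_ : Fin M) => v i : Matrix (Fin N) (Fin M) ℝ) =
      (Matrix.of fun i (_ : Fin 1) => v i : Matrix (Fin N) (Fin 1) ℝ) *
      (Matrix.of fun (_ : Fin 1) _ => (1 : ℝ) : Matrix (Fin 1) (Fin M) ℝ) := by
    ext i j
    simp [Matrix.mul_apply]
  rw [h]
  exact (rank_mul_le_left _ _).trans (rank_le_width _)

/-- A matrix factorizing as `H Wᵀ` has rank at most `d`; consequently if
`softmax (H Wᵀ) = softmax A`, then some matrix in `F(A)` has rank at most `d`,
and `rank A ≤ d + 1`. -/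
theorem rank_le_of_factorization {N M d : ℕ}
    (A A' : Matrix (Fin N) (Fin M) ℝ)
    (H : Matrix (Fin N) (Fin d) ℝ) (W : Matrix (Fin M) (Fin d) ℝ)
    (hA' : A' = H * Wᵀ) :
    A'.rank ≤ d ∧
      (rowSoftmax (H * Wᵀ) = rowSoftmax A →
        (∃ c : Fin N → ℝ,
          (Matrix.of fun i j => A i j + c i : Matrix (Fin N) (Fin M) ℝ).rank ≤ d) ∧
        A.rank ≤ d + 1) := by
  have hrank : A'.rank ≤ d := by
    rw [hA']
    exact (rank_mul_le_right H Wᵀ).trans (rank_le_height Wᵀ)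
  refine ⟨hrank, fun hsm => ?_⟩
  rcases Nat.eq_zero_or_pos M with hM | hM
  · subst hM
    refine ⟨⟨fun _ => 0, le_trans (rank_le_width _) (Nat.zero_le d)⟩, ?_⟩
    exact le_trans (rank_le_width _) (Nat.zero_le _)
  have : Nonempty (Fin M) := ⟨⟨0, hM⟩⟩
  set S1 : Fin N → ℝ := fun i => ∑ k, Real.exp ((H * Wᵀ) i k) with hS1
  set S2 : Fin N → ℝ := fun i => ∑ k, Real.exp (A i k) with hS2
  have hS1pos : ∀ i, 0 < S1 i := fun i =>
    Finset.sum_pos (fun k _ => Real.exp_pos _) Finset.univ_nonempty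
  have hS2pos : ∀ i, 0 < S2 i := fun i =>
    Finset.sum_pos (fun k _ => Real.exp_pos _) Finset.univ_nonempty
  set c : Fin N → ℝ := fun i => Real.log (S1 i) - Real.log (S2 i) with hc
  have key : (Matrix.of fun i j => A i j + c i : Matrix (Fin N) (Fin M) ℝ) = H * Wᵀ := by
    ext i j
    have h1 : Real.exp ((H * Wᵀ) i j) / S1 i = Real.exp (A i j) / S2 i :=
      congrFun (congrFun hsm i) j
    have h2 : Real.exp ((H * Wᵀ) i j) * S2 i = Real.exp (A i j) * S1 i :=
      (div_eq_div_iff (hS1pos i).ne' (hS2pos i).ne').mp h1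
    have h3 := congrArg Real.log h2
    rw [Real.log_mul (Real.exp_ne_zero _) (hS2pos i).ne',
        Real.log_mul (Real.exp_ne_zero _) (hS1pos i).ne',
        Real.log_exp, Real.log_exp] at h3
    simp only [Matrix.of_apply, hc]
    linarith
  refine ⟨⟨c, by rw [key, ← hA']; exact hrank⟩, ?_⟩
  have hdecomp : A = (Matrix.of fun i j => A i j + c i : Matrix (Fin N) (Fin M) ℝ) +
      (Matrix.of fun i (_ : Fin M) => -c i : Matrix (Fin N) (Fin M) ℝ) := by
    ext i j; simp
  calc A.rank ≤ (Matrix.of fun i j => A i j + c i : Matrix (Fin N) (Fin M) ℝ).rank +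
        (Matrix.of fun i (_ : Fin M) => -c i : Matrix (Fin N) (Fin M) ℝ).rank := by
        conv_lhs => rw [hdecomp]
        exact matrix_rank_add_le _ _
    _ ≤ d + 1 := add_le_add (by rw [key, ← hA']; exact hrank) (matrix_rank_const_col_le_one _)
end

section
/- (MoC rank limitation.) Let d, K, N, M be given. For each context index i ∈ Fin N, let π_i : Fin K → ℝ be mixture weights and h_{i,k} ∈ ℝ^d be context vectors, and let w_x ∈ ℝ^d for x ∈ Fin M be word embeddings. Define the N×M logit matrix L by L_{ix} = ⟪Σ_{k} π_{i,k} h_{i,k}, w_x⟫. Then rank(L) ≤ d; i.e., the Mixture-of-Contexts logit matrix has rank bounded by the embedding dimension d, the same rank limitation as plain Softmax. -/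
/-- MoC rank limitation: the Mixture-of-Contexts logit matrix has rank at most `d`. -/
theorem moc_rank_le_dim {d K N M : ℕ}
    (π : Fin N → Fin K → ℝ) (h : Fin N → Fin K → (Fin d → ℝ))
    (w : Fin M → (Fin d → ℝ))
    (L : Matrix (Fin N) (Fin M) ℝ)
    (hL : ∀ i x, L i x = ∑ j, (∑ k, π i k * h i k j) * w x j) :
    L.rank ≤ d := by
  have hfac : L = (Matrix.of fun i j => ∑ k, π i k * h i k j) *
      (Matrix.of fun (j : Fin d) x => w x j) := by
    ext i x
    simp [Matrix.mul_apply, hL]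
  rw [hfac]
  calc (_ * _ : Matrix (Fin N) (Fin M) ℝ).rank ≤
      (Matrix.of fun (j : Fin d) x => w x j : Matrix (Fin d) (Fin M) ℝ).rank :=
        Matrix.rank_mul_le_right _ _
    _ ≤ d := by simpa using Matrix.rank_le_card_height (Matrix.of fun (j : Fin d) x => w x j)
end
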